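/- arXiv:2604.04286 — 2 statements merged into one kernel-verified Lean document; each statement's English description precedes it below -/
import Mathlib

section
/- Suppose s : ℝ≥0 → ℝⁿ and θ̃ : ℝ≥0 → ℝᵖ are differentiable, M(t) is a symmetric matrix-valued function, Γ ≻ 0 constant, K_s ≻ 0, and V(t) = ½ s(t)ᵀ M(t) s(t) + ½ θ̃(t)ᵀ Γ⁻¹ θ̃(t) satisfies the closed-loop identities M ṡ = -K_s s + P Y θ̃ - C s with P s = s, (d/dt)θ̃ = -Γ Yᵀ P s, and sᵀ(Ṁ - 2C)s = 0. Then V̇(t) = -s(t)ᵀ K_s s(t) ≤ 0 for all t. -/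
open Matrix

/-!
Differentiating `V` gives `sᵀ M ṡ + ½ sᵀ Ṁ s + θ̃ᵀ Γ⁻¹ (d/dt)θ̃`. The closed loop turns `sᵀ M ṡ` into
`-sᵀ K_s s + sᵀ Y θ̃ - sᵀ C s` (using `Pᵀ s = P s = s`), skew-symmetry of `Ṁ - 2C` cancels the `C`-term
against `½ sᵀ Ṁ s`, and the adaptation law makes `θ̃ᵀ Γ⁻¹ (d/dt)θ̃ = -sᵀ Y θ̃` cancel the cross term.
What remains is `-sᵀ K_s s`, which is nonpositive because `K_s ≻ 0`.
-/

theorem Matrix.IsSymm.dotProduct_mulVec_comm {α ι : Type*} [CommSemiring α] [Fintype ι]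
    {A : Matrix ι ι α} (hA : A.IsSymm) (u v : ι → α) : u ⬝ᵥ A *ᵥ v = v ⬝ᵥ A *ᵥ u := by
  simpa only [hA.eq] using dotProduct_transpose_mulVec A u v

section Derivatives

variable {𝕜 ι κ : Type*} [NontriviallyNormedField 𝕜] [Fintype ι] {t : 𝕜}

theorem HasDerivAt.dotProduct {f g : 𝕜 → ι → 𝕜} {f' g' : ι → 𝕜}
    (hf : HasDerivAt f f' t) (hg : HasDerivAt g g' t) :
    HasDerivAt (fun τ => f τ ⬝ᵥ g τ) (f' ⬝ᵥ g t + f t ⬝ᵥ g') t := by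
  rw [_root_.dotProduct, _root_.dotProduct, ← Finset.sum_add_distrib]
  exact HasDerivAt.fun_sum fun i _ => (hasDerivAt_pi.1 hf i).fun_mul (hasDerivAt_pi.1 hg i)

theorem HasDerivAt.mulVec {A : 𝕜 → Matrix κ ι 𝕜} {A' : Matrix κ ι 𝕜} {v : 𝕜 → ι → 𝕜}
    {v' : ι → 𝕜} (hA : ∀ i j, HasDerivAt (fun τ => A τ i j) (A' i j) t)
    (hv : HasDerivAt v v' t) :
    HasDerivAt (fun τ => A τ *ᵥ v τ) (A' *ᵥ v t + A t *ᵥ v') t :=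
  hasDerivAt_pi.2 fun i => (hasDerivAt_pi.2 (hA i)).dotProduct hv

theorem HasDerivAt.dotProduct_mulVec_self {A : 𝕜 → Matrix ι ι 𝕜} {A' : Matrix ι ι 𝕜}
    {x : 𝕜 → ι → 𝕜} {x' : ι → 𝕜} (hA : ∀ i j, HasDerivAt (fun τ => A τ i j) (A' i j) t)
    (hsymm : (A t).IsSymm) (hx : HasDerivAt x x' t) :
    HasDerivAt (fun τ => x τ ⬝ᵥ A τ *ᵥ x τ) (x t ⬝ᵥ A' *ᵥ x t + 2 * (x t ⬝ᵥ A t *ᵥ x')) t := by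
  convert hx.dotProduct (HasDerivAt.mulVec hA hx) using 1
  rw [dotProduct_add, hsymm.dotProduct_mulVec_comm x']
  ring

end Derivatives

theorem lyapunov_derivative_negative {n p : ℕ}
    (M C : ℝ → Matrix (Fin n) (Fin n) ℝ)
    (M' : ℝ → Matrix (Fin n) (Fin n) ℝ)
    (Ks : Matrix (Fin n) (Fin n) ℝ) (Γ : Matrix (Fin p) (Fin p) ℝ)
    (Y : ℝ → Matrix (Fin n) (Fin p) ℝ)
    (P : ℝ → Matrix (Fin n) (Fin n) ℝ)
    (s s' : ℝ → Fin n → ℝ) (θ : ℝ → Fin p → ℝ)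
    (V : ℝ → ℝ)
    (hKs : Ks.PosDef) (hΓ : Γ.PosDef)
    (hMsym : ∀ t, (M t)ᵀ = M t)
    (hPsym : ∀ t, (P t)ᵀ = P t)
    -- differentiability of M, s, θ̃ with the stated derivatives
    (hM' : ∀ t, ∀ i j, HasDerivAt (fun τ => M τ i j) (M' t i j) t)
    (hs : ∀ t, HasDerivAt s (s' t) t)
    (hθ : ∀ t, HasDerivAt θ (-(Γ *ᵥ ((Y t)ᵀ *ᵥ (P t *ᵥ s t)))) t)
    -- closed-loop identities
    (hloop : ∀ t, M t *ᵥ s' t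
      = -(Ks *ᵥ s t) + P t *ᵥ (Y t *ᵥ θ t) - C t *ᵥ s t)
    (hPs : ∀ t, P t *ᵥ s t = s t)
    (hskew : ∀ t, s t ⬝ᵥ ((M' t - (2 : ℝ) • C t) *ᵥ s t) = 0)
    (hV : ∀ t, V t = (1/2) * (s t ⬝ᵥ (M t *ᵥ s t))
      + (1/2) * (θ t ⬝ᵥ (Γ⁻¹ *ᵥ θ t))) :
    ∀ t, HasDerivAt V (-(s t ⬝ᵥ (Ks *ᵥ s t))) t ∧
      -(s t ⬝ᵥ (Ks *ᵥ s t)) ≤ 0 := by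
  have hΓinv : (Γ⁻¹).IsSymm := (isHermitian_iff_isSymm.1 hΓ.isHermitian).inv
  intro t
  have hkinetic := HasDerivAt.dotProduct_mulVec_self (hM' t) (hMsym t) (hs t)
  have hparam := HasDerivAt.dotProduct_mulVec_self (A' := 0)
    (fun i j => hasDerivAt_const t (Γ⁻¹ i j)) hΓinv (hθ t)
  have hcross : s t ⬝ᵥ P t *ᵥ (Y t *ᵥ θ t) = s t ⬝ᵥ Y t *ᵥ θ t := by
    rw [IsSymm.dotProduct_mulVec_comm (hPsym t), hPs t, dotProduct_comm]
  have hadapt : θ t ⬝ᵥ Γ⁻¹ *ᵥ -(Γ *ᵥ ((Y t)ᵀ *ᵥ (P t *ᵥ s t))) = -(s t ⬝ᵥ Y t *ᵥ θ t) := by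
    rw [mulVec_neg, mulVec_mulVec, nonsing_inv_mul Γ ((isUnit_iff_isUnit_det Γ).1 hΓ.isUnit),
      one_mulVec, hPs t, dotProduct_neg, dotProduct_transpose_mulVec]
  have hskew' : s t ⬝ᵥ M' t *ᵥ s t = 2 * (s t ⬝ᵥ C t *ᵥ s t) := by
    simpa [sub_mulVec, smul_mulVec, sub_eq_zero] using hskew t
  refine ⟨?_, neg_nonpos.2 (by simpa using hKs.posSemidef.dotProduct_mulVec_nonneg (s t))⟩
  rw [funext hV]
  refine ((hkinetic.const_mul (1/2)).add (hparam.const_mul (1/2))).congr_deriv ?_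
  rw [hloop t, dotProduct_sub, dotProduct_add, dotProduct_neg, hcross, hskew', hadapt]
  simp only [zero_mulVec, dotProduct_zero]
  ring
end

section
/- Barbalat-type lemma: if f : ℝ≥0 → ℝⁿ is continuously differentiable, ∫₀^∞ ‖f(t)‖² dt < ∞, and f' is bounded, then f(t) → 0 as t → ∞. -/
/-!
If `‖f t‖ ≥ ε` at arbitrarily late times `t`, uniform continuity keeps `‖f‖ ≥ ε / 2` on the
windows `[t, t + δ / 2]` of a fixed length, so each of them carries at least `δ / 2 * (ε / 2) ^ p`
of the integral of `‖f‖ ^ p`. Integrability of `‖f‖ ^ p` forces these window integrals to tend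
to `0`, a contradiction. A bounded derivative makes `f` Lipschitz, hence uniformly continuous.
-/

open Matrix MeasureTheory Filter

open Set Topology

theorem tendsto_intervalIntegral_add_atTop_zero {E : Type*} [NormedAddCommGroup E]
    [NormedSpace ℝ E] {φ : ℝ → E} {a : ℝ} (hφ : IntegrableOn φ (Ioi a)) (δ : ℝ) :
    Tendsto (fun t => ∫ x in t..t + δ, φ x) atTop (𝓝 0) := by
  have hint : ∀ b, a ≤ b → IntervalIntegrable φ volume a b := fun b hb =>
    (intervalIntegrable_iff_integrableOn_Ioc_of_le hb).2 (hφ.mono_set Ioc_subset_Ioi_self)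
  have hlim := (intervalIntegral_tendsto_integral_Ioi a hφ
    (tendsto_atTop_add_const_right _ δ tendsto_id)).sub
    (intervalIntegral_tendsto_integral_Ioi a hφ tendsto_id)
  rw [sub_self] at hlim
  simp only [id] at hlim
  refine hlim.congr' ?_
  filter_upwards [eventually_ge_atTop a, eventually_ge_atTop (a - δ)] with t hta htδ
  exact intervalIntegral.integral_interval_sub_left (hint _ (by linarith)) (hint t hta)

theorem tendsto_zero_of_uniformContinuousOn_of_integrableOn_norm_pow {E : Type*}
    [NormedAddCommGroup E] {f : ℝ → E} {a : ℝ} {p : ℕ}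
    (hf : UniformContinuousOn f (Ici a)) (hint : IntegrableOn (fun t => ‖f t‖ ^ p) (Ioi a)) :
    Tendsto f atTop (𝓝 0) := by
  refine NormedAddGroup.tendsto_nhds_zero.2 fun ε hε => ?_
  obtain ⟨δ, hδ, hclose⟩ := Metric.uniformContinuousOn_iff.1 hf (ε / 2) (half_pos hε)
  have hmass : 0 < δ / 2 * (ε / 2) ^ p := by positivity
  filter_upwards [(tendsto_intervalIntegral_add_atTop_zero hint (δ / 2)).eventually
    (gt_mem_nhds hmass), eventually_ge_atTop a] with t hsmall hta
  by_contra! hft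
  have hwindow : ∀ x ∈ Icc t (t + δ / 2), (ε / 2) ^ p ≤ ‖f x‖ ^ p := by
    intro x hx
    have hdist : dist (f x) (f t) < ε / 2 := hclose x (mem_Ici.2 (hta.trans hx.1)) t hta
      (by rw [Real.dist_eq, abs_of_nonneg (by linarith [hx.1])]; linarith [hx.2])
    rw [dist_eq_norm, ← norm_neg, neg_sub] at hdist
    have := norm_sub_norm_le (f t) (f x)
    gcongr
    linarith
  have hlower := intervalIntegral.integral_mono_on (by linarith) intervalIntegrable_const
    ((intervalIntegrable_iff_integrableOn_Ioc_of_le (by linarith)).2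
      (hint.mono_set fun x hx => lt_of_le_of_lt hta hx.1)) hwindow
  rw [intervalIntegral.integral_const, smul_eq_mul, add_sub_cancel_left] at hlower
  linarith

theorem barbalat_L2_bounded_deriv_general {n : ℕ}
    (f f' : ℝ → EuclideanSpace ℝ (Fin n))
    (hderiv : ∀ t ≥ (0 : ℝ), HasDerivWithinAt f (f' t) (Set.Ici 0) t)
    (hL2 : IntegrableOn (fun t => ‖f t‖ ^ 2) (Set.Ioi (0 : ℝ)))
    (hbound : ∃ B > (0 : ℝ), ∀ t ≥ (0 : ℝ), ‖f' t‖ ≤ B) :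
    Tendsto f atTop (nhds 0) := by
  obtain ⟨B, -, hB⟩ := hbound
  have hlip : LipschitzOnWith B.toNNReal f (Ici 0) :=
    (convex_Ici 0).lipschitzOnWith_of_nnnorm_hasDerivWithin_le hderiv fun t ht => by
      simpa [← NNReal.coe_le_coe] using (hB t ht).trans (le_max_left B 0)
  exact tendsto_zero_of_uniformContinuousOn_of_integrableOn_norm_pow hlip.uniformContinuousOn hL2

theorem barbalat_L2_bounded_deriv {n : ℕ}
    (f f' : ℝ → EuclideanSpace ℝ (Fin n))
    (hderiv : ∀ t ≥ (0 : ℝ), HasDerivWithinAt f (f' t) (Set.Ici 0) t)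
    (hcont : ContinuousOn f' (Set.Ici 0))
    (hL2 : IntegrableOn (fun t => ‖f t‖ ^ 2) (Set.Ioi (0 : ℝ)))
    (hbound : ∃ B > (0 : ℝ), ∀ t ≥ (0 : ℝ), ‖f' t‖ ≤ B) :
    Tendsto f atTop (nhds 0) :=
  barbalat_L2_bounded_deriv_general f f' hderiv hL2 hbound
end
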